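/- For N ≥ 2, the double sum ∑_{m ≤ N} ∑_{n ≤ N} τ₃(m)τ₃(n)/lcm(m,n) is O((log N)^{15}). -/

import Mathlib

/-- The 3-fold divisor function: number of ordered triples of positive integers with product `n`. -/
noncomputable def tau3 (n : ℕ) : ℕ :=
  Nat.card {t : ℕ × ℕ × ℕ // 0 < t.1 ∧ 0 < t.2.1 ∧ 0 < t.2.2 ∧ t.1 * t.2.1 * t.2.2 = n}

/-!
With `a(m) = τ₃(m) / m` we have `τ₃(m) τ₃(n) / [m, n] = (m, n) a(m) a(n)`, and `(m, n)` is at most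
the sum of the common divisors `d ≤ N` of `m` and `n`; hence the double sum is at most
`∑_{d ≤ N} d (∑_{d ∣ m ≤ N} a(m))²`. Since `τ₃(d u) ≤ τ₃(d) τ₃(u)`, the inner sum is at most
`a(d) ∑_{u ≤ N} a(u)`, so the double sum is at most `(∑_{u ≤ N} τ₃(u) / u)² ∑_{d ≤ N} τ₃(d)² / d`.

Writing `τ_k(n) = #(Nat.finMulAntidiag k n)`, expanding `τ_k(n) / n` over factorisations bounds
`∑_{n ≤ N} τ_k(n) / n` by `H_N ^ k`, and `τ₃(d)² ≤ τ₉(d)` because two factorisations of `d` into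
three factors are the row and column products of a `3 × 3` matrix of factors. Altogether the sum
is at most `H_N ^ 15 ≤ ((1 + 1 / log 2) log N) ^ 15`.
-/

open Finset

section Decomposition

variable {α ι κ : Type*}

theorem Finset.exists_dvd_prod_eq [CommMonoid α] [DecompositionMonoid α] [Subsingleton αˣ]
    [DecidableEq ι] (s : Finset ι) (f : ι → α) {d : α} (hd : d ∣ ∏ i ∈ s, f i) :
    ∃ g : ι → α, (∀ i, g i ∣ f i) ∧ ∏ i ∈ s, g i = d := by
  induction s using Finset.induction_on generalizing d with
  | empty =>
    exact ⟨1, fun _ => one_dvd _, by simpa [eq_comm] using isUnit_of_dvd_one hd⟩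
  | insert a s ha ih =>
    rw [prod_insert ha] at hd
    obtain ⟨d₁, d₂, hd₁, hd₂, rfl⟩ := exists_dvd_and_dvd_of_dvd_mul hd
    obtain ⟨g, hgf, hg⟩ := ih hd₂
    refine ⟨Function.update g a d₁, fun i => ?_, ?_⟩
    · rcases eq_or_ne i a with rfl | hi
      · simpa using hd₁
      · simpa [hi] using hgf i
    · rw [prod_insert ha, prod_update_of_notMem ha, hg, Function.update_self]

theorem Finset.exists_matrix_prod_rows_cols [CommMonoidWithZero α] [IsCancelMulZero α]
    [DecompositionMonoid α] [Subsingleton αˣ] [DecidableEq ι] [Fintype κ] [DecidableEq κ]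
    (s : Finset ι) (f : ι → α) (g : κ → α) (hg : ∏ j, g j ≠ 0) (hfg : ∏ i ∈ s, f i = ∏ j, g j) :
    ∃ M : ι → κ → α, (∀ i ∈ s, ∏ j, M i j = f i) ∧ ∀ j, ∏ i ∈ s, M i j = g j := by
  induction s using Finset.induction_on generalizing g with
  | empty =>
    refine ⟨1, by simp, fun j => ?_⟩
    rw [prod_empty] at hfg
    rw [prod_empty, eq_comm, ← isUnit_iff_eq_one]
    exact isUnit_of_dvd_one (hfg ▸ dvd_prod_of_mem g (mem_univ j))
  | insert a s ha ih =>
    rw [prod_insert ha] at hfg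
    obtain ⟨r, hrg, hr⟩ := exists_dvd_prod_eq univ g (Dvd.intro _ hfg)
    choose g' hg' using hrg
    have hprod : ∏ j, g j = f a * ∏ j, g' j := by
      simp_rw [hg', prod_mul_distrib, hr]
    have hfa : f a ≠ 0 := left_ne_zero_of_mul (hprod ▸ hg)
    obtain ⟨M, hrow, hcol⟩ := ih g' (right_ne_zero_of_mul (hprod ▸ hg))
      (mul_left_cancel₀ hfa (hfg.trans hprod))
    refine ⟨Function.update M a r, fun i hi => ?_, fun j => ?_⟩
    · rcases eq_or_ne i a with rfl | hia
      · simpa using hr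
      · simpa [hia] using hrow i ((mem_insert.mp hi).resolve_left hia)
    · rw [prod_insert ha, Function.update_self, hg' j, ← hcol j]
      congr 1
      exact prod_congr rfl fun i hi => by rw [Function.update_of_ne (ne_of_mem_of_not_mem hi ha)]

end Decomposition

namespace Nat

theorem card_finMulAntidiag_mul_le (k d u : ℕ) :
    #(finMulAntidiag k (d * u)) ≤ #(finMulAntidiag k d) * #(finMulAntidiag k u) := by
  rw [← card_product]
  refine card_le_card_of_surjOn (fun p => p.1 * p.2) fun f hf => ?_
  obtain ⟨hprod, hdu⟩ := mem_finMulAntidiag.mp hf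
  obtain ⟨g, hgf, hg⟩ := exists_dvd_prod_eq univ f (hprod ▸ Dvd.intro u rfl)
  choose h hh using hgf
  have hd : d ≠ 0 := left_ne_zero_of_mul hdu
  have hhu : ∏ i, h i = u := by
    refine mul_left_cancel₀ hd ?_
    rw [← hprod, ← hg, ← prod_mul_distrib]
    exact prod_congr rfl fun i _ => (hh i).symm
  refine ⟨(g, h), ?_, funext fun i => (hh i).symm⟩
  simp only [coe_product, Set.mem_prod, mem_coe, mem_finMulAntidiag]
  exact ⟨⟨hg, hd⟩, hhu, right_ne_zero_of_mul hdu⟩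

theorem card_finMulAntidiag_mul_card_le (k l n : ℕ) :
    #(finMulAntidiag k n) * #(finMulAntidiag l n) ≤ #(finMulAntidiag (k * l) n) := by
  rw [← card_product]
  let e : Fin k × Fin l ≃ Fin (k * l) := finProdFinEquiv
  refine card_le_card_of_surjOn
    (fun M => (fun i => ∏ j, M (e (i, j)), fun j => ∏ i, M (e (i, j)))) fun p hp => ?_
  simp only [coe_product, Set.mem_prod, mem_coe, mem_finMulAntidiag] at hp
  obtain ⟨⟨hf, hn⟩, hg, -⟩ := hp
  obtain ⟨M, hrow, hcol⟩ := exists_matrix_prod_rows_cols univ p.1 p.2 (hg ▸ hn) (hf.trans hg.symm)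
  refine ⟨fun x => M (e.symm x).1 (e.symm x).2, ?_, ?_⟩
  · rw [mem_coe, mem_finMulAntidiag, ← e.prod_comp, Fintype.prod_prod_type]
    simp only [Equiv.symm_apply_apply]
    exact ⟨(prod_congr rfl fun i _ => hrow i (mem_univ i)).trans hf, hn⟩
  · simp only [Equiv.symm_apply_apply]
    exact Prod.ext (funext fun i => hrow i (mem_univ i)) (funext hcol)


theorem sum_card_finMulAntidiag_div_le (k N : ℕ) :
    ∑ n ∈ Icc 1 N, (#(finMulAntidiag k n) : ℝ) / n ≤ harmonic N ^ k := by
  have hterm : ∀ n, ∀ f ∈ finMulAntidiag k n, ∏ i, ((f i : ℝ))⁻¹ = (n : ℝ)⁻¹ := by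
    intro n f hf
    rw [prod_inv_distrib, ← Nat.cast_prod, prod_eq_of_mem_finMulAntidiag hf]
  have hdisj : (Icc 1 N : Set ℕ).PairwiseDisjoint (finMulAntidiag k) := by
    intro m _ n _ hmn
    refine disjoint_left.mpr fun f hm hn => hmn ?_
    rw [← prod_eq_of_mem_finMulAntidiag hm, ← prod_eq_of_mem_finMulAntidiag hn]
  have hsub : (Icc 1 N).biUnion (finMulAntidiag k) ⊆ Fintype.piFinset fun _ => Icc 1 N := by
    intro f hf
    obtain ⟨n, hn, hf⟩ := mem_biUnion.mp hf
    refine Fintype.mem_piFinset.mpr fun i => mem_Icc.mpr ⟨?_, ?_⟩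
    · exact pos_of_ne_zero (ne_zero_of_mem_finMulAntidiag hf i)
    · exact (le_of_dvd (mem_Icc.mp hn).1 (dvd_of_mem_finMulAntidiag hf i)).trans (mem_Icc.mp hn).2
  calc ∑ n ∈ Icc 1 N, (#(finMulAntidiag k n) : ℝ) / n
      = ∑ n ∈ Icc 1 N, ∑ f ∈ finMulAntidiag k n, ∏ i, ((f i : ℝ))⁻¹ := by
        refine sum_congr rfl fun n _ => ?_
        rw [sum_congr rfl (hterm n), sum_const, nsmul_eq_mul, div_eq_mul_inv]
    _ = ∑ f ∈ (Icc 1 N).biUnion (finMulAntidiag k), ∏ i, ((f i : ℝ))⁻¹ := (sum_biUnion hdisj).symm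
    _ ≤ ∑ f ∈ Fintype.piFinset (fun _ => Icc 1 N), ∏ i, ((f i : ℝ))⁻¹ :=
        sum_le_sum_of_subset_of_nonneg hsub fun _ _ _ => by positivity
    _ = harmonic N ^ k := by
        rw [← prod_univ_sum (fun _ => Icc 1 N) fun _ j => ((j : ℝ))⁻¹, prod_const,
          Finset.card_univ, Fintype.card_fin, harmonic_eq_sum_Icc]
        push_cast
        rfl

end Nat

theorem tau3_eq_card_finMulAntidiag (n : ℕ) : tau3 n = #(Nat.finMulAntidiag 3 n) := by
  let e : ℕ × ℕ × ℕ ≃ (Fin 3 → ℕ) :=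
    { toFun := fun t => ![t.1, t.2.1, t.2.2]
      invFun := fun f => (f 0, f 1, f 2)
      left_inv := fun _ => rfl
      right_inv := fun f => by ext i; fin_cases i <;> rfl }
  rw [tau3, ← Nat.card_eq_finsetCard]
  refine Nat.card_congr (e.subtypeEquiv fun ⟨a, b, c⟩ => ?_)
  change _ ↔ ![a, b, c] ∈ _
  rw [Nat.mem_finMulAntidiag, Fin.prod_univ_three]
  simp only [Matrix.cons_val_zero, Matrix.cons_val_one, Matrix.cons_val_two, Nat.pos_iff_ne_zero]
  constructor
  · rintro ⟨ha, hb, hc, rfl⟩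
    exact ⟨rfl, by positivity⟩
  · rintro ⟨rfl, h⟩
    simp only [mul_ne_zero_iff] at h
    exact ⟨h.1.1, h.1.2, h.2, rfl⟩

section WeightedGcdSums

variable (a : ℕ → ℝ) (N : ℕ)

theorem sum_filter_dvd_le_mul_sum (ha : ∀ u, 0 ≤ a u) {d : ℕ} (hd : 0 < d)
    (hmul : ∀ u, a (d * u) ≤ a d * a u) :
    ∑ m ∈ Icc 1 N with d ∣ m, a m ≤ a d * ∑ u ∈ Icc 1 N, a u := by
  have hsub : {m ∈ Icc 1 N | d ∣ m} ⊆ (Icc 1 N).image (d * ·) := by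
    intro m hm
    obtain ⟨hmN, u, rfl⟩ := mem_filter.mp hm
    obtain ⟨hu, huN⟩ := mem_Icc.mp hmN
    exact mem_image.mpr ⟨u, mem_Icc.mpr ⟨Nat.pos_of_mul_pos_left hu,
      (Nat.le_mul_of_pos_left u hd).trans huN⟩, rfl⟩
  calc ∑ m ∈ Icc 1 N with d ∣ m, a m
      ≤ ∑ m ∈ (Icc 1 N).image (d * ·), a m :=
        sum_le_sum_of_subset_of_nonneg hsub fun m _ _ => ha m
    _ ≤ ∑ u ∈ Icc 1 N, a (d * u) := sum_image_le_of_nonneg fun m _ => ha m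
    _ ≤ a d * ∑ u ∈ Icc 1 N, a u := by
        rw [mul_sum]
        exact sum_le_sum fun u _ => hmul u

theorem sum_gcd_mul_mul_le (ha : ∀ u, 0 ≤ a u) :
    ∑ m ∈ Icc 1 N, ∑ n ∈ Icc 1 N, (m.gcd n : ℝ) * a m * a n ≤
      ∑ d ∈ Icc 1 N, d * (∑ m ∈ Icc 1 N with d ∣ m, a m) ^ 2 := by
  have hgcd : ∀ m ∈ Icc 1 N, ∀ n,
      (m.gcd n : ℝ) ≤ ∑ d ∈ Icc 1 N, if d ∣ m ∧ d ∣ n then (d : ℝ) else 0 := by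
    intro m hm n
    obtain ⟨hm, hmN⟩ := mem_Icc.mp hm
    have hg : m.gcd n ∈ Icc 1 N := mem_Icc.mpr ⟨Nat.gcd_pos_of_pos_left n hm,
      (Nat.le_of_dvd hm (Nat.gcd_dvd_left m n)).trans hmN⟩
    refine le_of_eq_of_le ?_ (single_le_sum (fun d _ => ?_) hg)
    · simp [Nat.gcd_dvd_left, Nat.gcd_dvd_right]
    · positivity
  calc ∑ m ∈ Icc 1 N, ∑ n ∈ Icc 1 N, (m.gcd n : ℝ) * a m * a n
      ≤ ∑ m ∈ Icc 1 N, ∑ n ∈ Icc 1 N,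
          (∑ d ∈ Icc 1 N, if d ∣ m ∧ d ∣ n then (d : ℝ) else 0) * a m * a n := by
        gcongr with m hm n
        · exact ha n
        · exact ha m
        · exact hgcd m hm n
    _ = ∑ d ∈ Icc 1 N, d * (∑ m ∈ Icc 1 N with d ∣ m, a m) ^ 2 := by
        simp_rw [sq, sum_filter, sum_mul_sum, mul_sum, sum_mul]
        symm
        rw [sum_comm]
        refine sum_congr rfl fun m _ => ?_
        rw [sum_comm]
        refine sum_congr rfl fun n _ => sum_congr rfl fun d _ => ?_
        by_cases hdm : d ∣ m <;> by_cases hdn : d ∣ n <;> simp [hdm, hdn, mul_assoc]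

theorem sum_gcd_mul_mul_le_of_submultiplicative (ha : ∀ u, 0 ≤ a u)
    (hmul : ∀ d u, a (d * u) ≤ a d * a u) :
    ∑ m ∈ Icc 1 N, ∑ n ∈ Icc 1 N, (m.gcd n : ℝ) * a m * a n ≤
      (∑ u ∈ Icc 1 N, a u) ^ 2 * ∑ d ∈ Icc 1 N, d * a d ^ 2 := by
  refine (sum_gcd_mul_mul_le a N ha).trans ?_
  rw [mul_sum]
  refine sum_le_sum fun d hd => ?_
  have hd : 0 < d := (mem_Icc.mp hd).1
  calc (d : ℝ) * (∑ m ∈ Icc 1 N with d ∣ m, a m) ^ 2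
      ≤ d * (a d * ∑ u ∈ Icc 1 N, a u) ^ 2 := by
        gcongr
        · exact sum_nonneg fun m _ => ha m
        · exact sum_filter_dvd_le_mul_sum a N ha hd (hmul d)
    _ = (∑ u ∈ Icc 1 N, a u) ^ 2 * (d * a d ^ 2) := by ring

end WeightedGcdSums

theorem mul_div_lcm_eq_gcd_mul (x y : ℝ) (m n : ℕ) :
    x * y / m.lcm n = m.gcd n * (x / m) * (y / n) := by
  rcases eq_or_ne m 0 with rfl | hm
  · simp
  rcases eq_or_ne n 0 with rfl | hn
  · simp
  have hgl : (m.gcd n : ℝ) * m.lcm n = m * n := by exact_mod_cast Nat.gcd_mul_lcm m n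
  have hl : (m.lcm n : ℝ) ≠ 0 := by exact_mod_cast Nat.lcm_ne_zero hm hn
  field_simp
  linear_combination -(x * y) * hgl

theorem sum_tau3_mul_tau3_div_lcm_le (N : ℕ) :
    ∑ m ∈ Icc 1 N, ∑ n ∈ Icc 1 N, (tau3 m : ℝ) * tau3 n / m.lcm n ≤ harmonic N ^ 15 := by
  set a : ℕ → ℝ := fun m => (tau3 m : ℝ) / m
  have ha : ∀ u, 0 ≤ a u := fun u => by positivity
  have hmul : ∀ d u, a (d * u) ≤ a d * a u := by
    intro d u
    simp only [a, div_mul_div_comm, Nat.cast_mul, tau3_eq_card_finMulAntidiag]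
    gcongr
    exact_mod_cast Nat.card_finMulAntidiag_mul_le 3 d u
  have hB : ∑ u ∈ Icc 1 N, a u ≤ harmonic N ^ 3 := by
    simpa only [a, tau3_eq_card_finMulAntidiag] using Nat.sum_card_finMulAntidiag_div_le 3 N
  have hsq : ∑ d ∈ Icc 1 N, (d : ℝ) * a d ^ 2 ≤ harmonic N ^ 9 := by
    refine le_trans (sum_le_sum fun d hd => ?_) (Nat.sum_card_finMulAntidiag_div_le 9 N)
    have hd : (d : ℝ) ≠ 0 := by exact_mod_cast (Nat.one_le_iff_ne_zero.mp (mem_Icc.mp hd).1)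
    rw [div_pow, mul_div, sq (d : ℝ), mul_div_mul_left _ _ hd, ← Nat.cast_pow, sq,
      tau3_eq_card_finMulAntidiag]
    gcongr
    exact_mod_cast Nat.card_finMulAntidiag_mul_card_le 3 3 d
  calc ∑ m ∈ Icc 1 N, ∑ n ∈ Icc 1 N, (tau3 m : ℝ) * tau3 n / m.lcm n
      = ∑ m ∈ Icc 1 N, ∑ n ∈ Icc 1 N, (m.gcd n : ℝ) * a m * a n := by
        simp only [mul_div_lcm_eq_gcd_mul, a]
    _ ≤ (∑ u ∈ Icc 1 N, a u) ^ 2 * ∑ d ∈ Icc 1 N, d * a d ^ 2 :=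
        sum_gcd_mul_mul_le_of_submultiplicative a N ha hmul
    _ ≤ (harmonic N ^ 3) ^ 2 * harmonic N ^ 9 := by gcongr
    _ = harmonic N ^ 15 := by ring

theorem harmonic_le_mul_log {N : ℕ} (hN : 2 ≤ N) :
    (harmonic N : ℝ) ≤ (1 + (Real.log 2)⁻¹) * Real.log N := by
  have hlog2 : 0 < Real.log 2 := Real.log_pos one_lt_two
  have hlogN : Real.log 2 ≤ Real.log N := Real.log_le_log two_pos (by exact_mod_cast hN)
  have hone : 1 ≤ (Real.log 2)⁻¹ * Real.log N := by
    rwa [inv_mul_eq_div, one_le_div hlog2]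
  linarith [harmonic_le_one_add_log N]

theorem stmt3 : ∃ C : ℝ, 0 < C ∧ ∀ N : ℕ, 2 ≤ N →
    ∑ m ∈ Finset.Icc 1 N, ∑ n ∈ Finset.Icc 1 N,
      (tau3 m : ℝ) * (tau3 n : ℝ) / (Nat.lcm m n : ℝ) ≤ C * Real.log N ^ 15 := by
  refine ⟨(1 + (Real.log 2)⁻¹) ^ 15, by positivity, fun N hN => ?_⟩
  calc _ ≤ (harmonic N : ℝ) ^ 15 := sum_tau3_mul_tau3_div_lcm_le N
    _ ≤ ((1 + (Real.log 2)⁻¹) * Real.log N) ^ 15 := by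
        gcongr
        · exact_mod_cast (harmonic_pos (by omega)).le
        · exact harmonic_le_mul_log hN
    _ = (1 + (Real.log 2)⁻¹) ^ 15 * Real.log N ^ 15 := mul_pow _ _ _
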